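/- Assume the Hypothesis, and assume further that if char(F) = 2 then O is closed under taking square roots. Then f(K) = K. -/

import Mathlib

open scoped Classical

/-- The cross-ratio `[a,b;c,d]` on the projective line `F ∪ {∞}` (modelled as
`Option F`, with `none` playing the role of `∞`), with the usual conventions
at `∞`; junk value `0` when two or more of the arguments are `∞`. -/
noncomputable def crossRatio {F : Type*} [Field F] :
    Option F → Option F → Option F → Option F → F
  | none,   some b, some c, some d => (d - b) / (c - b)
  | some a, none,   some c, some d => (c - a) / (d - a)
  | some a, some b, none,   some d => (d - b) / (d - a)
  | some a, some b, some c, none   => (c - a) / (c - b)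
  | some a, some b, some c, some d => ((c - a) / (c - b)) * ((d - b) / (d - a))
  | _, _, _, _ => 0

/-- A permutation `f` of the projective line is `O`-preserving if for all
quadruples of distinct points, `[a,b;c,d] ∈ O ↔ [f a, f b; f c, f d] ∈ O`. -/
def OPreserving {F : Type*} [Field F] (O : Set F) (f : Equiv.Perm (Option F)) : Prop :=
  ∀ a b c d : Option F, a ≠ b → a ≠ c → a ≠ d → b ≠ c → b ≠ d → c ≠ d →
    (crossRatio a b c d ∈ O ↔ crossRatio (f a) (f b) (f c) (f d) ∈ O)

/-- The map `F → F` induced by a permutation of `F ∪ {∞}` fixing `∞`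
(junk value `0` if `f` maps a finite point to `∞`). -/
noncomputable def fmap {F : Type*} [Field F] (f : Equiv.Perm (Option F)) (a : F) : F :=
  (f (some a)).getD 0

/-!
Call a point of `F ∪ {∞}` constructible if it is reached from `∞, 0, 1` by repeatedly adjoining
the fourth point of a quadruple of distinct points whose cross-ratio lies in `O`. An
`O`-preserving permutation fixing `∞, 0, 1` maps constructible points to constructible points,
and so does its inverse, so it suffices that the finite constructible points are exactly `K`.
Solving `[a,b;c,d] = λ` for `d` is a rational operation over `K`, so they lie in `K`.
Conversely, they are stable under the Möbius maps `z ↦ 1 - z` and `z ↦ 1/z`, which permute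
`∞, 0, 1` and preserve cross-ratios, and under `(u, v) ↦ v + λ(u - v)` for `λ ∈ O` (the point
`d` with `[∞,v;u,d] = λ`). These give inverses, multiplication by `λ` and by `1 - λ`, hence
`x + y = (1 - λ) · x/(1 - λ) + λ · y/λ`, negatives `-x = 1 - (1 + x)`, and so all of `K`.
-/

open Function

section

variable {F : Type*} [Field F]

inductive Constructible (O : Set F) : Option F → Prop
  | infty : Constructible O none
  | zero : Constructible O (some 0)
  | one : Constructible O (some 1)
  | step {a b c d : Option F} (hab : a ≠ b) (hac : a ≠ c) (had : a ≠ d) (hbc : b ≠ c)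
      (hbd : b ≠ d) (hcd : c ≠ d) (ha : Constructible O a) (hb : Constructible O b)
      (hc : Constructible O c) (h : crossRatio a b c d ∈ O) : Constructible O d

theorem crossRatio_map_affine {s : F} (t : F) (hs : s ≠ 0) (a b c d : Option F) :
    crossRatio (a.map (s * · + t)) (b.map (s * · + t)) (c.map (s * · + t)) (d.map (s * · + t)) =
      crossRatio a b c d := by
  rcases a with _ | a <;> rcases b with _ | b <;> rcases c with _ | c <;> rcases d with _ | d <;>
    simp only [Option.map_none, Option.map_some, crossRatio, add_sub_add_right_eq_sub, ← mul_sub,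
      mul_div_mul_left _ _ hs]

noncomputable def invPoint : Option F → Option F
  | none => some 0
  | some x => if x = 0 then none else some x⁻¹

theorem invPoint_involutive : Involutive (invPoint (F := F)) := by
  rintro (_ | x)
  · simp [invPoint]
  · by_cases hx : x = 0 <;> simp [invPoint, hx]

theorem crossRatio_invPoint {a b c d : Option F} (hab : a ≠ b) (hac : a ≠ c) (had : a ≠ d)
    (hbc : b ≠ c) (hbd : b ≠ d) (hcd : c ≠ d) :
    crossRatio (invPoint a) (invPoint b) (invPoint c) (invPoint d) = crossRatio a b c d := by
  rcases a with _ | a <;> rcases b with _ | b <;> rcases c with _ | c <;> rcases d with _ | d <;>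
    simp only [ne_eq, reduceCtorEq, not_false_eq_true, Option.some.injEq,
      not_true_eq_false] at * <;>
    simp only [invPoint] <;>
    split_ifs <;> subst_vars <;>
    first
    | exact absurd rfl ‹¬(0 : F) = 0›
    | simp only [crossRatio]; field_simp; ring

namespace Constructible

variable {O : Set F}

theorem map {g : Option F → Option F} (hg : Injective g) (hinf : Constructible O (g none))
    (h0 : Constructible O (g (some 0))) (h1 : Constructible O (g (some 1)))
    (hgO : ∀ a b c d, a ≠ b → a ≠ c → a ≠ d → b ≠ c → b ≠ d → c ≠ d →
      crossRatio a b c d ∈ O → crossRatio (g a) (g b) (g c) (g d) ∈ O)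
    {x : Option F} (hx : Constructible O x) : Constructible O (g x) := by
  induction hx with
  | infty => exact hinf
  | zero => exact h0
  | one => exact h1
  | step hab hac had hbc hbd hcd _ _ _ h iha ihb ihc =>
    exact step (hg.ne hab) (hg.ne hac) (hg.ne had) (hg.ne hbc) (hg.ne hbd) (hg.ne hcd) iha ihb ihc
      (hgO _ _ _ _ hab hac had hbc hbd hcd h)

theorem one_sub {x : F} (hx : Constructible O (some x)) : Constructible O (some (1 - x)) := by
  have hg : Injective (Option.map ((-1 : F) * · + 1)) :=
    Option.map_injective fun y z h ↦ by simpa using h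
  have := map hg infty (by simpa using one) (by simpa using zero)
    (fun a b c d _ _ _ _ _ _ h ↦ by rwa [crossRatio_map_affine _ (by simp)]) hx
  simpa [neg_add_eq_sub] using this

theorem inv {x : F} (hx : Constructible O (some x)) : Constructible O (some x⁻¹) := by
  rcases eq_or_ne x 0 with rfl | hx0
  · simpa using zero
  have := map invPoint_involutive.injective (by simpa [invPoint] using zero)
    (by simpa [invPoint] using infty) (by simpa [invPoint] using one)
    (fun a b c d hab hac had hbc hbd hcd h ↦ by
      rwa [crossRatio_invPoint hab hac had hbc hbd hcd]) hx
  simpa [invPoint, hx0] using this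

theorem lineMap {l u v : F} (hl : l ∈ O) (hl0 : l ≠ 0) (hl1 : l ≠ 1)
    (hu : Constructible O (some u)) (hv : Constructible O (some v)) :
    Constructible O (some (v + l * (u - v))) := by
  rcases eq_or_ne u v with rfl | huv
  · simpa using hv
  have huv' : u - v ≠ 0 := sub_ne_zero.mpr huv
  have hdv : v + l * (u - v) ≠ v := by simpa using mul_ne_zero hl0 huv'
  have hdu : v + l * (u - v) ≠ u := fun h ↦
    hl1 (mul_right_cancel₀ huv' (by linear_combination h))
  refine step (a := none) (by simp) (by simp) (by simp) (by simpa using huv.symm)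
    (by simpa using hdv.symm) (by simpa using hdu.symm) infty hv hu ?_
  convert hl using 1
  simp only [crossRatio]
  field_simp
  ring

theorem mul_left {l x : F} (hl : l ∈ O) (hl0 : l ≠ 0) (hl1 : l ≠ 1)
    (hx : Constructible O (some x)) : Constructible O (some (l * x)) := by
  simpa using lineMap hl hl0 hl1 hx zero

theorem one_sub_mul {l x : F} (hl : l ∈ O) (hl0 : l ≠ 0) (hl1 : l ≠ 1)
    (hx : Constructible O (some x)) : Constructible O (some ((1 - l) * x)) := by
  convert lineMap hl hl0 hl1 zero hx using 2
  ring

theorem add (hO : ∀ l ∈ O, l ≠ 0 ∧ l ≠ 1) (hne : O.Nonempty)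
    {x y : F} (hx : Constructible O (some x)) (hy : Constructible O (some y)) :
    Constructible O (some (x + y)) := by
  obtain ⟨l, hl⟩ := hne
  obtain ⟨hl0, hl1⟩ := hO l hl
  have hl1' : 1 - l ≠ 0 := sub_ne_zero.mpr hl1.symm
  have hx' : Constructible O (some (x / (1 - l))) := by
    simpa [div_eq_mul_inv] using (one_sub_mul hl hl0 hl1 hx.inv).inv
  have hy' : Constructible O (some (y / l)) := by
    simpa [div_eq_mul_inv] using (mul_left hl hl0 hl1 hy.inv).inv
  convert lineMap hl hl0 hl1 hy' hx' using 2
  field_simp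
  ring

theorem neg (hO : ∀ l ∈ O, l ≠ 0 ∧ l ≠ 1) (hne : O.Nonempty)
    {x : F} (hx : Constructible O (some x)) : Constructible O (some (-x)) := by
  simpa using (add hO hne one hx).one_sub

theorem of_mem_closure (hO : ∀ l ∈ O, l ≠ 0 ∧ l ≠ 1) (hne : O.Nonempty)
    {x : F} (hx : x ∈ Subfield.closure O) : Constructible O (some x) := by
  suffices ∀ y, Constructible O (some y) → Constructible O (some (x * y)) by
    simpa using this 1 one
  induction hx using Subfield.closure_induction with
  | mem l hl => exact fun y ↦ mul_left hl (hO l hl).1 (hO l hl).2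
  | one => simp
  | add x₁ x₂ _ _ ih₁ ih₂ =>
    exact fun y hy ↦ by simpa [add_mul] using add hO hne (ih₁ y hy) (ih₂ y hy)
  | neg x _ ih => exact fun y hy ↦ by simpa using neg hO hne (ih y hy)
  | inv x _ ih => exact fun y hy ↦ by simpa [mul_comm] using (ih _ hy.inv).inv
  | mul x₁ x₂ _ _ ih₁ ih₂ =>
    exact fun y hy ↦ by simpa [mul_assoc] using ih₁ _ (ih₂ y hy)

end Constructible

namespace Subfield

variable {K : Subfield F} {a b c d : F}

theorem mem_of_sub_div_sub_mem (ha : a ∈ K) (hc : c ∈ K) (hca : c ≠ a)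
    (h : (d - a) / (c - a) ∈ K) : d ∈ K := by
  have hmem : a + (d - a) / (c - a) * (c - a) ∈ K := add_mem ha (mul_mem h (sub_mem hc ha))
  rwa [div_mul_cancel₀ _ (sub_ne_zero.mpr hca), add_sub_cancel] at hmem

theorem mem_of_sub_div_sub_left_mem (ha : a ∈ K) (hb : b ∈ K) (hab : a ≠ b) (hda : d ≠ a)
    (h : (d - b) / (d - a) ∈ K) : d ∈ K := by
  set m := (d - b) / (d - a)
  have hm : m * (d - a) = d - b := div_mul_cancel₀ _ (sub_ne_zero.mpr hda)
  have hm1 : 1 - m ≠ 0 := fun h ↦ hab (by linear_combination -hm - (d - a) * h)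
  have hmem : (b - m * a) / (1 - m) ∈ K :=
    div_mem (sub_mem hb (mul_mem h ha)) (sub_mem (one_mem K) h)
  have hd : (b - m * a) / (1 - m) = d := by
    rw [div_eq_iff hm1]
    linear_combination hm
  rwa [hd] at hmem

theorem mem_of_crossRatio_mem {a b c : Option F} (hab : a ≠ b) (hac : a ≠ c)
    (had : a ≠ some d) (hbc : b ≠ c) (hbd : b ≠ some d) (hcd : c ≠ some d)
    (ha : ∀ x ∈ a, x ∈ K) (hb : ∀ x ∈ b, x ∈ K) (hc : ∀ x ∈ c, x ∈ K)
    (h : crossRatio a b c (some d) ∈ K) : d ∈ K := by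
  rcases a with _ | a <;> rcases b with _ | b <;> rcases c with _ | c
  any_goals contradiction
  all_goals simp only [ne_eq, reduceCtorEq, not_false_eq_true, Option.some.injEq,
    Option.mem_def, forall_eq', crossRatio] at *
  · exact mem_of_sub_div_sub_mem hb hc (Ne.symm hbc) h
  · exact mem_of_sub_div_sub_mem ha hc (Ne.symm hac) (by simpa using inv_mem h)
  · exact mem_of_sub_div_sub_left_mem ha hb hab (Ne.symm had) h
  · have hcab : (c - a) / (c - b) ≠ 0 :=
      div_ne_zero (sub_ne_zero.mpr (Ne.symm hac)) (sub_ne_zero.mpr (Ne.symm hbc))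
    have hcabK : (c - a) / (c - b) ∈ K := div_mem (sub_mem hc ha) (sub_mem hc hb)
    refine mem_of_sub_div_sub_left_mem ha hb hab (Ne.symm had) ?_
    have := mul_mem (inv_mem hcabK) h
    rwa [inv_mul_cancel_left₀ hcab] at this

end Subfield

theorem Constructible.mem_subfield {O : Set F} {K : Subfield F} (hOK : O ⊆ K) {x : Option F}
    (hx : Constructible O x) : ∀ y ∈ x, y ∈ K := by
  induction hx with
  | infty | zero | one => simp
  | step hab hac had hbc hbd hcd _ _ _ h iha ihb ihc =>
    rintro y rfl
    exact K.mem_of_crossRatio_mem hab hac had hbc hbd hcd iha ihb ihc (hOK h)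

namespace OPreserving

variable {O : Set F} {f : Equiv.Perm (Option F)}

theorem symm (hf : OPreserving O f) : OPreserving O f.symm := by
  intro a b c d hab hac had hbc hbd hcd
  have := hf (f.symm a) (f.symm b) (f.symm c) (f.symm d) (f.symm.injective.ne hab)
    (f.symm.injective.ne hac) (f.symm.injective.ne had) (f.symm.injective.ne hbc)
    (f.symm.injective.ne hbd) (f.symm.injective.ne hcd)
  simp only [Equiv.apply_symm_apply] at this
  exact this.symm

theorem constructible (hf : OPreserving O f) (hinf : f none = none) (h0 : f (some 0) = some 0)
    (h1 : f (some 1) = some 1) {x : Option F} (hx : Constructible O x) :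
    Constructible O (f x) :=
  Constructible.map f.injective (by simpa [hinf] using Constructible.infty)
    (by simpa [h0] using Constructible.zero) (by simpa [h1] using Constructible.one)
    (fun a b c d hab hac had hbc hbd hcd ↦ (hf a b c d hab hac had hbc hbd hcd).mp) hx

theorem exists_apply_some_eq (hO : ∀ l ∈ O, l ≠ 0 ∧ l ≠ 1) (hne : O.Nonempty)
    (hf : OPreserving O f) (hinf : f none = none) (h0 : f (some 0) = some 0)
    (h1 : f (some 1) = some 1) {y : F} (hy : y ∈ Subfield.closure O) :
    ∃ z ∈ Subfield.closure O, f (some y) = some z := by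
  have hfy := hf.constructible hinf h0 h1 (Constructible.of_mem_closure hO hne hy)
  obtain ⟨z, hz⟩ := Option.ne_none_iff_exists'.mp fun h ↦
    Option.some_ne_none y (f.injective (h.trans hinf.symm))
  exact ⟨z, hfy.mem_subfield Subfield.subset_closure z hz, hz⟩

end OPreserving

end

/-- Here `Subfield.closure O` is the subfield `K = k(O)` of `F` generated by `O`
(over the prime field `k`), and `fmap f '' K` is the image `f(K)` of `K` under `f`. -/
theorem image_of_K_eq_K {F : Type*} [Field F]
    (O : Set F) (hne : O.Nonempty) (hO : ∀ x ∈ O, x ≠ 0 ∧ x ≠ 1)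
    (f : Equiv.Perm (Option F)) (hf : OPreserving O f)
    (hinf : f none = none) (h0 : f (some 0) = some 0) (h1 : f (some 1) = some 1) :
    (ringChar F = 2 → ∀ x ∈ O, ∀ y : F, y ^ 2 = x → y ∈ O) →
      fmap f '' (Subfield.closure O : Set F) = (Subfield.closure O : Set F) := by
  intro _
  have hfix {p : Option F} (hp : f p = p) : f.symm p = p := f.symm_apply_eq.mpr hp.symm
  ext x
  constructor
  · rintro ⟨y, hy, rfl⟩
    obtain ⟨z, hz, hfy⟩ := hf.exists_apply_some_eq hO hne hinf h0 h1 hy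
    simpa [fmap, hfy] using hz
  · intro hx
    obtain ⟨y, hy, hfy⟩ :=
      hf.symm.exists_apply_some_eq hO hne (hfix hinf) (hfix h0) (hfix h1) hx
    exact ⟨y, hy, by simp [fmap, (f.symm_apply_eq.mp hfy).symm]⟩
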